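/- arXiv:2410.04207 — 3 statements merged into one kernel-verified Lean document; each statement's English description precedes it below -/
import Mathlib

section
/- If U, U' ∈ ℝ^{n×r} and V, V' ∈ ℝ^{m×r} all have rank r and UV^T = U'V'^T, then the r×r matrix (V'^T V)(V^T V)^{-1} is invertible. -/
open Matrix

lemma aux_isUnit_of_rank_eq {r : ℕ} (A : Matrix (Fin r) (Fin r) ℝ) (hA : A.rank = r) :
    IsUnit A := by
  rw [← Matrix.mulVec_surjective_iff_isUnit]
  have htop : LinearMap.range A.mulVecLin = ⊤ := by
    apply Submodule.eq_top_of_finrank_eq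
    rw [← Matrix.rank, hA]
    simp [Module.finrank_pi]
  intro b
  have hb : b ∈ LinearMap.range A.mulVecLin := htop.symm ▸ Submodule.mem_top
  exact hb

/-- If `U, U', V, V'` all have rank `r` and `UV^T = U'V'^T`, then
`(V'^T V)(V^T V)⁻¹` is invertible. -/
theorem stmt_3 {n m r : ℕ} (U U' : Matrix (Fin n) (Fin r) ℝ) (V V' : Matrix (Fin m) (Fin r) ℝ)
    (hU : U.rank = r) (hU' : U'.rank = r) (hV : V.rank = r) (hV' : V'.rank = r)
    (h : U * Vᵀ = U' * V'ᵀ) :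
    IsUnit ((V'ᵀ * V) * (Vᵀ * V)⁻¹) := by
  have hVV : IsUnit (Vᵀ * V) := by
    apply aux_isUnit_of_rank_eq
    rw [Matrix.rank_transpose_mul_self, hV]
  have heq : U * (Vᵀ * V) = U' * (V'ᵀ * V) := by
    rw [← Matrix.mul_assoc, ← Matrix.mul_assoc, h]
  -- rank of U * (Vᵀ * V) is r
  have h1 : (U * (Vᵀ * V)).rank = r := by
    apply le_antisymm
    · exact le_of_le_of_eq (Matrix.rank_mul_le_left U (Vᵀ * V)) hU
    · have : (U * (Vᵀ * V) * (Vᵀ * V)⁻¹).rank ≤ (U * (Vᵀ * V)).rank :=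
        Matrix.rank_mul_le_left _ _
      rwa [Matrix.mul_assoc, Matrix.mul_nonsing_inv _ (hVV.map (Matrix.detMonoidHom)),
        Matrix.mul_one, hU] at this
  have h2 : (V'ᵀ * V).rank = r := by
    apply le_antisymm
    · exact le_of_le_of_eq (Matrix.rank_mul_le_right V'ᵀ V) hV
    · calc r = (U' * (V'ᵀ * V)).rank := by rw [← heq, h1]
        _ ≤ (V'ᵀ * V).rank := Matrix.rank_mul_le_right _ _
  exact (aux_isUnit_of_rank_eq _ h2).mul (Matrix.isUnit_nonsing_inv_iff.mpr hVV)
end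

section
/- Every linear map F: ℝ^{n×r} × ℝ^{m×r} → ℝ^{n'×r} × ℝ^{m'×r} that is equivariant with respect to the GL(r) action R ⋆ (U,V) = (UR, VR^{-T}) is of the form F(U,V) = (ΦU, ΨV) for some matrices Φ ∈ ℝ^{n'×n} and Ψ ∈ ℝ^{m'×m}. -/
/-!
Write `F = [[A, B], [C, D]]` in blocks. Equivariance under the scalar matrix `R = 2 • 1`, whose
inverse transpose is `2⁻¹ • 1`, scales the two inputs by different factors `2` and `2⁻¹`;
linearity then forces the off-diagonal blocks `B` and `C` to vanish. The diagonal block `A`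
commutes with right multiplication by invertible matrices, hence (as `1 + E_jk` is invertible)
with right multiplication by every matrix unit `E_jk` and so by every matrix. Such a map is left
multiplication by the matrix `Φ` whose `p`-th column is the `z`-th column of `A E_pz`. The block
`D` is treated in the same way, since `R ↦ (R⁻¹)ᵀ` is a bijection of invertible matrices.
-/

open Matrix

theorem eq_zero_of_smul_eq_smul {R M : Type*} [Ring R] [IsCancelMulZero R] [AddCommGroup M]
    [Module R M] [Module.IsTorsionFree R M] {a b : R} (hab : a ≠ b) {x : M}
    (h : a • x = b • x) : x = 0 := by
  by_contra hx
  exact hab (smul_left_injective R hx h)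

namespace LinearMap

variable {R M₁ M₂ N₁ N₂ : Type*} [Ring R] [IsCancelMulZero R]
  [AddCommGroup M₁] [Module R M₁] [AddCommGroup M₂] [Module R M₂]
  [AddCommGroup N₁] [Module R N₁] [Module.IsTorsionFree R N₁]
  [AddCommGroup N₂] [Module R N₂] [Module.IsTorsionFree R N₂]

theorem eq_prodMap_of_map_smul_smul (F : M₁ × M₂ →ₗ[R] N₁ × N₂) {a b : R} (hab : a ≠ b)
    (hF : ∀ x y, F (a • x, b • y) = (a • (F (x, y)).1, b • (F (x, y)).2)) :
    F = (fst R N₁ N₂ ∘ₗ F ∘ₗ inl R M₁ M₂).prodMap (snd R N₁ N₂ ∘ₗ F ∘ₗ inr R M₁ M₂) := by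
  have hfst (y : M₂) : (F (0, y)).1 = 0 := by
    have hlin : F (a • 0, b • y) = b • F (0, y) := by
      rw [smul_zero, ← map_smul, Prod.smul_mk, smul_zero]
    have h := hF 0 y
    rw [hlin] at h
    exact eq_zero_of_smul_eq_smul hab.symm (congrArg Prod.fst h)
  have hsnd (x : M₁) : (F (x, 0)).2 = 0 := by
    have hlin : F (a • x, b • 0) = a • F (x, 0) := by
      rw [smul_zero, ← map_smul, Prod.smul_mk, smul_zero]
    have h := hF x 0
    rw [hlin] at h
    exact eq_zero_of_smul_eq_smul hab (congrArg Prod.snd h)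
  refine LinearMap.ext fun ⟨x, y⟩ => ?_
  have hsplit : F (x, y) = F (x, 0) + F (0, y) := by
    rw [← map_add, Prod.mk_add_mk, add_zero, zero_add]
  rw [hsplit]
  exact Prod.ext (by simp [hfst]) (by simp [hsnd])

end LinearMap

namespace Matrix

variable {ι ι' κ α : Type*} [Fintype κ] [DecidableEq κ] [CommRing α]

theorem isUnit_one_add_single (h2 : IsUnit (2 : α)) (j k : κ) :
    IsUnit (1 + single j k (1 : α)) := by
  rw [isUnit_iff_isUnit_det, single_eq_single_vecMulVec_single, vecMulVec_eq Unit,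
    det_one_add_replicateCol_mul_replicateRow]
  by_cases hjk : j = k
  · subst hjk
    simpa [one_add_one_eq_two] using h2
  · simp [hjk]

theorem transpose_nonsing_inv_transpose_nonsing_inv {S : Matrix κ κ α} (hS : IsUnit S.det) :
    ((S⁻¹)ᵀ⁻¹)ᵀ = S := by
  rw [← transpose_nonsing_inv, transpose_transpose, nonsing_inv_nonsing_inv S hS]

theorem _root_.LinearMap.map_mul_of_map_mul_isUnit (h2 : IsUnit (2 : α))
    (A : Matrix ι κ α →ₗ[α] Matrix ι' κ α)
    (hA : ∀ U (R : Matrix κ κ α), IsUnit R → A (U * R) = A U * R) (U : Matrix ι κ α)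
    (M : Matrix κ κ α) : A (U * M) = A U * M := by
  induction M using Matrix.induction_on' with
  | h_zero => simp
  | h_add M N hM hN => rw [Matrix.mul_add, map_add, hM, hN, Matrix.mul_add]
  | h_std_basis j k c =>
    have h := hA U _ (isUnit_one_add_single h2 j k)
    rw [Matrix.mul_add, Matrix.mul_add, Matrix.mul_one, Matrix.mul_one, map_add,
      add_right_inj] at h
    rw [← mul_one c, ← smul_eq_mul, ← smul_single, Matrix.mul_smul, map_smul, h,
      Matrix.mul_smul]

theorem _root_.LinearMap.exists_eq_mul_of_map_mul [Fintype ι] [DecidableEq ι]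
    (A : Matrix ι κ α →ₗ[α] Matrix ι' κ α) (hA : ∀ U (M : Matrix κ κ α), A (U * M) = A U * M) :
    ∃ Φ : Matrix ι' ι α, ∀ U, A U = Φ * U := by
  cases isEmpty_or_nonempty κ with
  | inl => exact ⟨0, fun U => Subsingleton.elim _ _⟩
  | inr hκ =>
    obtain ⟨z⟩ := hκ
    refine ⟨of fun i p => A (single p z 1) i z, fun U => ?_⟩
    suffices A = mulLeftLinearMap κ α (of fun i p => A (single p z 1) i z) from
      congrArg (· U) this
    refine ext_linearMap α fun p q => LinearMap.ext_ring ?_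
    ext i b
    have hfactor : single p q (1 : α) = single p z (1 : α) * single z q (1 : α) := by simp
    simp only [LinearMap.comp_apply, singleLinearMap_apply, mulLeftLinearMap_apply]
    rw [hfactor, hA]
    obtain rfl | hqb := eq_or_ne b q
    · simp
    · simp [hqb]

end Matrix

/-- Every linear map `F : ℝ^{n×r} × ℝ^{m×r} → ℝ^{n'×r} × ℝ^{m'×r}` equivariant with
respect to the GL(r) action `R ⋆ (U,V) = (UR, VR^{-T})` has the form
`F(U,V) = (ΦU, ΨV)` for some matrices `Φ`, `Ψ`. -/
theorem stmt_7 {n m n' m' r : ℕ}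
    (F : (Matrix (Fin n) (Fin r) ℝ × Matrix (Fin m) (Fin r) ℝ) →ₗ[ℝ]
         (Matrix (Fin n') (Fin r) ℝ × Matrix (Fin m') (Fin r) ℝ))
    (hF : ∀ R : Matrix (Fin r) (Fin r) ℝ, IsUnit R →
      ∀ (U : Matrix (Fin n) (Fin r) ℝ) (V : Matrix (Fin m) (Fin r) ℝ),
        F (U * R, V * (R⁻¹)ᵀ) = ((F (U, V)).1 * R, (F (U, V)).2 * (R⁻¹)ᵀ)) :
    ∃ (Φ : Matrix (Fin n') (Fin n) ℝ) (Ψ : Matrix (Fin m') (Fin m) ℝ),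
      ∀ (U : Matrix (Fin n) (Fin r) ℝ) (V : Matrix (Fin m) (Fin r) ℝ),
        F (U, V) = (Φ * U, Ψ * V) := by
  have h2 : IsUnit (2 : ℝ) := two_ne_zero.isUnit
  have hscale (U V) : F ((2 : ℝ) • U, (2 : ℝ)⁻¹ • V) =
      ((2 : ℝ) • (F (U, V)).1, (2 : ℝ)⁻¹ • (F (U, V)).2) := by
    have hunit : IsUnit ((2 : ℝ) • (1 : Matrix (Fin r) (Fin r) ℝ)) := by
      rw [isUnit_iff_isUnit_det]; simp
    have hinv : ((2 : ℝ) • (1 : Matrix (Fin r) (Fin r) ℝ))⁻¹ = (2 : ℝ)⁻¹ • 1 :=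
      inv_eq_right_inv (by simp [smul_smul])
    simpa [hinv] using hF _ hunit U V
  obtain ⟨Φ, hΦ⟩ := (LinearMap.fst ℝ _ _ ∘ₗ F ∘ₗ LinearMap.inl ℝ _ _).exists_eq_mul_of_map_mul <|
    LinearMap.map_mul_of_map_mul_isUnit h2 _ fun U R hR => by
      simpa using congrArg Prod.fst (hF R hR U 0)
  obtain ⟨Ψ, hΨ⟩ := (LinearMap.snd ℝ _ _ ∘ₗ F ∘ₗ LinearMap.inr ℝ _ _).exists_eq_mul_of_map_mul <|
    LinearMap.map_mul_of_map_mul_isUnit h2 _ fun V S hS => by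
      have h := congrArg Prod.snd (hF (S⁻¹)ᵀ (by simpa using hS) 0 V)
      simpa [transpose_nonsing_inv_transpose_nonsing_inv ((isUnit_iff_isUnit_det S).mp hS)] using h
  refine ⟨Φ, Ψ, fun U V => ?_⟩
  rw [F.eq_prodMap_of_map_smul_smul (by norm_num) hscale, LinearMap.prodMap_apply, hΦ, hΨ]
end

section
/- Scale symmetry of Kronecker factorizations: for matrices U ∈ ℝ^{n'×m'}, V ∈ ℝ^{n''×m''} and any nonzero scalar s, (sU) ⊗ ((1/s)V) = U ⊗ V, where ⊗ denotes the Kronecker product. Conversely, if U ⊗ V = U' ⊗ V' with all four matrices nonzero, then there exists a nonzero scalar s with U' = sU and V' = (1/s)V. -/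
open Matrix Kronecker

/-
Every entry of `U ⊗ V` is a product `U i j * V k l`. Fixing a nonzero entry `V k₀ l₀` of `V`,
comparing the entries at position `(k₀, l₀)` of every block of `U ⊗ V = U' ⊗ V'` forces `U'` to
be the multiple `s = V k₀ l₀ / V' k₀ l₀` of `U`; substituting back and cancelling a nonzero entry of `U`
gives `V = s V'`.
-/

namespace Matrix

variable {K l m n p : Type*}

theorem smul_kronecker_inv_smul [Semifield K] {s : K} (hs : s ≠ 0)
    (A : Matrix l m K) (B : Matrix n p K) :
    (s • A) ⊗ₖ (s⁻¹ • B) = A ⊗ₖ B := by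
  rw [smul_kronecker, kronecker_smul, smul_smul, mul_inv_cancel₀ hs, one_smul]

theorem exists_ne_zero_apply_ne_zero [Zero K] {A : Matrix m n K} (hA : A ≠ 0) :
    ∃ i j, A i j ≠ 0 := by
  by_contra! h
  exact hA (ext h)

theorem exists_smul_eq_of_kronecker_eq [Field K] {A A' : Matrix l m K} {B B' : Matrix n p K}
    (hA : A ≠ 0) (hB : B ≠ 0) (h : A ⊗ₖ B = A' ⊗ₖ B') :
    ∃ s : K, s ≠ 0 ∧ A' = s • A ∧ B' = s⁻¹ • B := by
  have hentry : ∀ i j k l, A i j * B k l = A' i j * B' k l := fun i j k l =>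
    congr_fun₂ h (i, k) (j, l)
  obtain ⟨i₀, j₀, hA₀⟩ := exists_ne_zero_apply_ne_zero hA
  obtain ⟨k₀, l₀, hB₀⟩ := exists_ne_zero_apply_ne_zero hB
  have hB'₀ : B' k₀ l₀ ≠ 0 :=
    right_ne_zero_of_mul (hentry i₀ j₀ k₀ l₀ ▸ mul_ne_zero hA₀ hB₀)
  set s := B k₀ l₀ / B' k₀ l₀
  have hs : s ≠ 0 := div_ne_zero hB₀ hB'₀
  have hA' : A' = s • A := by
    ext i j
    have := hentry i j k₀ l₀
    simp only [smul_apply, smul_eq_mul, s]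
    field_simp
    linear_combination -this
  have hB' : B = s • B' := by
    ext k l
    have := hentry i₀ j₀ k l
    rw [hA', smul_apply, smul_eq_mul, mul_assoc, mul_left_comm] at this
    exact mul_left_cancel₀ hA₀ this
  exact ⟨s, hs, hA', by rw [hB', inv_smul_smul₀ hs]⟩

end Matrix

/-- Scale symmetry of Kronecker factorizations: `(sU) ⊗ ((1/s)V) = U ⊗ V` for `s ≠ 0`;
conversely, if `U ⊗ V = U' ⊗ V'` with all four matrices nonzero, then `U' = sU` and
`V' = (1/s)V` for some nonzero scalar `s`. -/
theorem stmt_17 {n₁ m₁ n₂ m₂ : ℕ}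
    (U : Matrix (Fin n₁) (Fin m₁) ℝ) (V : Matrix (Fin n₂) (Fin m₂) ℝ) :
    (∀ s : ℝ, s ≠ 0 → (s • U) ⊗ₖ ((1 / s) • V) = U ⊗ₖ V) ∧
    ∀ (U' : Matrix (Fin n₁) (Fin m₁) ℝ) (V' : Matrix (Fin n₂) (Fin m₂) ℝ),
      U ≠ 0 → V ≠ 0 → U' ≠ 0 → V' ≠ 0 → U ⊗ₖ V = U' ⊗ₖ V' →
      ∃ s : ℝ, s ≠ 0 ∧ U' = s • U ∧ V' = (1 / s) • V := by
  simp only [one_div]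
  exact ⟨fun s hs => smul_kronecker_inv_smul hs U V,
    fun _ _ hU hV _ _ h => exists_smul_eq_of_kronecker_eq hU hV h⟩
end
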